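/- arXiv:1002.0822 — 3 statements merged into one kernel-verified Lean document; each statement's English description precedes it below -/
import Mathlib

section
/- Let Σ be a forward-complete control system on ℝⁿ with input set 𝖴 ⊆ ℝᵐ given by f : ℝⁿ × 𝖴 → ℝⁿ. Suppose there exist a continuously differentiable function V : ℝⁿ × ℝⁿ → ℝ≥0, class 𝒦∞ functions α̲, ᾱ, σ, and a constant κ ∈ ℝ with κ ≠ 0 such that: (i) for all x, x′ ∈ ℝⁿ, α̲(‖x − x′‖) ≤ V(x, x′) ≤ ᾱ(‖x − x′‖); and (ii) for all x, x′ ∈ ℝⁿ and all u, u′ ∈ 𝖴, (∂V/∂x)(x,x′) · f(x,u) + (∂V/∂x′)(x,x′) · f(x′,u′) ≤ κ V(x,x′) + σ(‖u − u′‖). Then for every τ > 0, every pair of input curves υ, υ′ : [0,τ[ → 𝖴, every pair of initial states x, x′ ∈ ℝⁿ, and every t ∈ [0,τ], the corresponding trajectories satisfy ‖ξ_{xυ}(t) − ξ_{x′υ′}(t)‖ ≤ α̲⁻¹(2 e^{κt} ᾱ(‖x − x′‖)) + α̲⁻¹(2 ((e^{κt} − 1)/κ) σ(‖υ − υ′‖_∞)).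 In particular, Σ is incrementally forward complete with bounding functions β(r,t) = α̲⁻¹(2 e^{κt} ᾱ(r)) and γ(r,t) = α̲⁻¹(2 ((e^{κt} − 1)/κ) σ(r)). -/
/-!
Along the two trajectories, `W r = V (ξ r, ξ' r)` satisfies `W' ≤ κ W + σ c` off the countable
set where the inputs jump, so Grönwall's comparison gives
`W t ≤ e^{κt} W 0 + ((e^{κt} - 1) / κ) σ c`. The sandwich bounds turn this into
`α̲ ‖ξ t - ξ' t‖ ≤ A + B` with `A, B ≥ 0`, and since `A + B ≤ 2 max A B`,
`α̲⁻¹ (A + B) ≤ α̲⁻¹ (2A) + α̲⁻¹ (2B)`.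
-/
open Set

/-- A class `𝒦∞` function `ℝ≥0 → ℝ≥0`, encoded as a function `ℝ → ℝ` restricted to `[0,∞)`:
continuous, strictly increasing, vanishing at `0`, and tending to `∞`. -/
def IsKInf (g : ℝ → ℝ) : Prop :=
  ContinuousOn g (Set.Ici 0) ∧ StrictMonoOn g (Set.Ici 0) ∧ g 0 = 0 ∧
    Filter.Tendsto g Filter.atTop Filter.atTop

open Filter Topology Real

theorem le_of_hasDerivAt_neg_off_countable {f f' : ℝ → ℝ} {a b : ℝ} {s : Set ℝ}
    (hs : s.Countable) (hab : a ≤ b) (hf : ContinuousOn f (Icc a b))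
    (hf' : ∀ x ∈ Ioo a b \ s, HasDerivAt f (f' x) x) (hneg : ∀ x ∈ Ioo a b \ s, f' x < 0) :
    f b ≤ f a := by
  by_contra! hlt
  -- a level `y ∉ f '' s`, crossed for the last time at `c`, would force `f' c ≥ 0`
  obtain ⟨y, hys, hy⟩ := ((hs.image f).dense_compl ℝ).exists_between hlt
  set K := Icc a b ∩ f ⁻¹' Iic y
  have hKbdd : BddAbove K := bddAbove_Icc.mono inter_subset_left
  have hcK : sSup K ∈ K :=
    (hf.preimage_isClosed_of_isClosed isClosed_Icc isClosed_Iic).csSup_mem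
      ⟨a, left_mem_Icc.2 hab, hy.1.le⟩ hKbdd
  set c := sSup K
  have hcb : c < b := hcK.1.2.lt_of_ne fun h => hy.2.not_ge (h ▸ hcK.2)
  have hfc : f c = y := by
    obtain ⟨z, hz, hfz⟩ := intermediate_value_Icc hcb.le (hf.mono (Icc_subset_Icc hcK.1.1 le_rfl))
      ⟨hcK.2, hy.2.le⟩
    have hzc : z ≤ c := le_csSup hKbdd ⟨⟨hcK.1.1.trans hz.1, hz.2⟩, hfz.le⟩
    rwa [le_antisymm hzc hz.1] at hfz
  have hc : c ∈ Ioo a b \ s :=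
    ⟨⟨hcK.1.1.lt_of_ne fun h => hy.1.ne (by rw [h, hfc]), hcb⟩, fun h => hys ⟨c, h, hfc⟩⟩
  have hslope : ∀ᶠ z in 𝓝[>] c, slope f c z < 0 :=
    (hasDerivAt_iff_tendsto_slope_left_right.1 (hf' c hc)).2.eventually (gt_mem_nhds (hneg c hc))
  obtain ⟨z, hz, hzb⟩ := (hslope.and (Ioc_mem_nhdsGT hcb)).exists
  have hyz : y < f z := by
    by_contra! h
    exact hzb.1.not_ge (le_csSup hKbdd ⟨⟨hcK.1.1.trans hzb.1.le, hzb.2⟩, h⟩)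
  rw [slope_def_field, hfc] at hz
  exact hz.not_ge (div_nonneg (by linarith) (by linarith [hzb.1]))

theorem antitoneOn_of_hasDerivAt_nonpos_off_countable {f f' : ℝ → ℝ} {a b : ℝ} {s : Set ℝ}
    (hs : s.Countable) (hf : ContinuousOn f (Icc a b))
    (hf' : ∀ x ∈ Ioo a b \ s, HasDerivAt f (f' x) x) (hf'₀ : ∀ x ∈ Ioo a b \ s, f' x ≤ 0) :
    AntitoneOn f (Icc a b) := by
  intro x hx y hy hxy
  have hsub : Ioo x y \ s ⊆ Ioo a b \ s := sdiff_subset_sdiff_left (Ioo_subset_Ioo hx.1 hy.2)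
  have hbound : ∀ ε > 0, f y - ε * y ≤ f x - ε * x := fun ε hε =>
    le_of_hasDerivAt_neg_off_countable hs hxy
      ((hf.mono (Icc_subset_Icc hx.1 hy.2)).sub (continuousOn_const.mul continuousOn_id))
      (fun z hz => (hf' z (hsub hz)).sub ((hasDerivAt_id z).const_mul ε))
      (fun z hz => by linarith [hf'₀ z (hsub hz)])
  have hlim : Tendsto (fun ε => f x - ε * x + ε * y) (𝓝[>] 0) (𝓝 (f x)) :=
    ((by fun_prop : Continuous fun ε : ℝ => f x - ε * x + ε * y).tendsto' 0 _
      (by simp)).mono_left nhdsWithin_le_nhds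
  exact ge_of_tendsto hlim (eventually_nhdsWithin_of_forall fun ε hε => by linarith [hbound ε hε])

theorem le_gronwallBound_of_hasDerivAt_off_countable {f f' : ℝ → ℝ} {δ K ε a b : ℝ}
    {s : Set ℝ} (hs : s.Countable) (hf : ContinuousOn f (Icc a b))
    (hf' : ∀ x ∈ Ioo a b \ s, HasDerivAt f (f' x) x) (ha : f a ≤ δ)
    (bound : ∀ x ∈ Ioo a b \ s, f' x ≤ K * f x + ε) :
    ∀ x ∈ Icc a b, f x ≤ gronwallBound δ K ε (x - a) := by
  set g := fun x => exp (-K * (x - a)) * (f x - gronwallBound δ K ε (x - a))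
  have hexp : ∀ x, HasDerivAt (fun x => exp (-K * (x - a))) (exp (-K * (x - a)) * -K) x :=
    fun x => by simpa using (((hasDerivAt_id x).sub_const a).const_mul (-K)).exp
  have hg : AntitoneOn g (Icc a b) := by
    refine antitoneOn_of_hasDerivAt_nonpos_off_countable hs ?_
      (fun x hx => (hexp x).mul ((hf' x hx).sub (hasDerivAt_gronwallBound_shift δ K ε x a)))
      fun x hx => ?_
    · exact (by fun_prop : Continuous fun x => exp (-K * (x - a))).continuousOn.mul
        (hf.sub fun x _ =>
          (hasDerivAt_gronwallBound_shift δ K ε x a).continuousAt.continuousWithinAt)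
    · have := bound x hx
      have := exp_pos (-K * (x - a))
      nlinarith
  intro x hx
  have hgx : g x ≤ g a := hg (left_mem_Icc.2 (hx.1.trans hx.2)) hx hx.1
  simp only [g, sub_self, mul_zero, exp_zero, one_mul, gronwallBound_x0] at hgx
  nlinarith [exp_pos (-K * (x - a))]

theorem le_gronwallBound_comp_of_fderiv_le {E : Type*} [NormedAddCommGroup E] [NormedSpace ℝ E]
    {V : E → ℝ} (hV : Differentiable ℝ V) {p p' : ℝ → E} {K ε a b : ℝ} {s : Set ℝ}
    (hs : s.Countable) (hp : ContinuousOn p (Icc a b))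
    (hp' : ∀ r ∈ Ioo a b \ s, HasDerivAt p (p' r) r)
    (bound : ∀ r ∈ Ioo a b \ s, fderiv ℝ V (p r) (p' r) ≤ K * V (p r) + ε) :
    ∀ r ∈ Icc a b, V (p r) ≤ gronwallBound (V (p a)) K ε (r - a) :=
  le_gronwallBound_of_hasDerivAt_off_countable hs (hV.continuous.comp_continuousOn hp)
    (fun r hr => (hV (p r)).hasFDerivAt.comp_hasDerivAt r (hp' r hr)) le_rfl bound

theorem exp_mul_sub_one_div_nonneg (κ : ℝ) {t : ℝ} (ht : 0 ≤ t) : 0 ≤ (exp (κ * t) - 1) / κ := by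
  rcases lt_trichotomy κ 0 with hκ | rfl | hκ
  · exact div_nonneg_of_nonpos
      (sub_nonpos.2 (exp_le_one_iff.2 (mul_nonpos_of_nonpos_of_nonneg hκ.le ht))) hκ.le
  · simp
  · exact div_nonneg (sub_nonneg.2 (one_le_exp (by positivity))) hκ.le

theorem IsKInf.nonneg {g : ℝ → ℝ} (hg : IsKInf g) {r : ℝ} (hr : 0 ≤ r) : 0 ≤ g r :=
  hg.2.2.1 ▸ hg.2.1.monotoneOn self_mem_Ici hr hr

theorem StrictMonoOn.le_of_apply_le_of_rightInvOn {α β : Type*} [LinearOrder α] [Preorder β]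
    {g : α → β} {ginv : β → α} {S : Set α} {T : Set β} (hg : StrictMonoOn g S)
    (hinv : RightInvOn ginv g T) (hmaps : MapsTo ginv T S) {r : α} {D : β} (hr : r ∈ S)
    (hD : D ∈ T) (h : g r ≤ D) : r ≤ ginv D :=
  (hg.le_iff_le hr (hmaps hD)).1 (by rwa [hinv hD])

theorem StrictMonoOn.le_add_of_apply_le_add {g ginv : ℝ → ℝ} (hg : StrictMonoOn g (Ici 0))
    (hinv : RightInvOn ginv g (Ici 0)) (hmaps : MapsTo ginv (Ici 0) (Ici 0)) {r A B : ℝ}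
    (hr : 0 ≤ r) (hA : 0 ≤ A) (hB : 0 ≤ B) (h : g r ≤ A + B) :
    r ≤ ginv (2 * A) + ginv (2 * B) := by
  have h2A : (0 : ℝ) ≤ ginv (2 * A) := hmaps (mem_Ici.2 (by positivity))
  have h2B : (0 : ℝ) ≤ ginv (2 * B) := hmaps (mem_Ici.2 (by positivity))
  rcases le_total A B with hAB | hBA
  · have := hg.le_of_apply_le_of_rightInvOn hinv hmaps hr (mem_Ici.2 (by positivity) : 2 * B ∈ _)
      (by linarith)
    linarith
  · have := hg.le_of_apply_le_of_rightInvOn hinv hmaps hr (mem_Ici.2 (by positivity) : 2 * A ∈ _)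
      (by linarith)
    linarith

theorem deltaFC_of_lyapunov_general {n m : ℕ}
    (U : Set (Fin m → ℝ))
    (f : (Fin n → ℝ) → (Fin m → ℝ) → (Fin n → ℝ))
    (V : ((Fin n → ℝ) × (Fin n → ℝ)) → ℝ)
    (hVsmooth : ContDiff ℝ 1 V)
    (αl αu σ : ℝ → ℝ) (αlinv : ℝ → ℝ) (κ : ℝ) (hκ : κ ≠ 0)
    (hαl : IsKInf αl) (hαu : IsKInf αu) (hσ : IsKInf σ)
    (hinv₂ : ∀ r ∈ Ici (0:ℝ), αl (αlinv r) = r)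
    (hinv₃ : ∀ r ∈ Ici (0:ℝ), αlinv r ∈ Ici (0:ℝ))
    (hsandwich : ∀ x x' : Fin n → ℝ,
      αl ‖x - x'‖ ≤ V (x, x') ∧ V (x, x') ≤ αu ‖x - x'‖)
    (hdecay : ∀ (x x' : Fin n → ℝ), ∀ u ∈ U, ∀ u' ∈ U,
      fderiv ℝ V (x, x') (f x u, f x' u') ≤ κ * V (x, x') + σ ‖u - u'‖)
    -- trajectories on `[0,τ]` with inputs `υ, υ' : [0,τ[ → U`
    (τ : ℝ)
    (υ υ' : ℝ → (Fin m → ℝ))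
    (hυ : ∀ t ∈ Ico 0 τ, υ t ∈ U) (hυ' : ∀ t ∈ Ico 0 τ, υ' t ∈ U)
    (x x' : Fin n → ℝ) (ξ ξ' : ℝ → (Fin n → ℝ))
    (hξ0 : ξ 0 = x) (hξ'0 : ξ' 0 = x')
    (hξcont : ContinuousOn ξ (Icc 0 τ)) (hξ'cont : ContinuousOn ξ' (Icc 0 τ))
    -- the ODE holds except on a countable set (the inputs are piecewise continuous)
    (s : Set ℝ) (hs : s.Countable)
    (hξode : ∀ t ∈ Ioo 0 τ \ s, HasDerivAt ξ (f (ξ t) (υ t)) t)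
    (hξ'ode : ∀ t ∈ Ioo 0 τ \ s, HasDerivAt ξ' (f (ξ' t) (υ' t)) t)
    (t : ℝ) (ht : t ∈ Icc 0 τ)
    -- `c` is an upper bound for `‖υ − υ'‖_∞` (in particular it may be taken equal to it)
    (c : ℝ) (hc0 : 0 ≤ c) (hc : ∀ r ∈ Ico 0 τ, ‖υ r - υ' r‖ ≤ c) :
    ‖ξ t - ξ' t‖ ≤
      αlinv (2 * Real.exp (κ * t) * αu ‖x - x'‖) +
        αlinv (2 * ((Real.exp (κ * t) - 1) / κ) * σ c) := by
  have hdecay' : ∀ r ∈ Ioo 0 τ \ s, fderiv ℝ V (ξ r, ξ' r) (f (ξ r) (υ r), f (ξ' r) (υ' r)) ≤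
      κ * V (ξ r, ξ' r) + σ c := fun r hr =>
    have hr' : r ∈ Ico 0 τ := Ioo_subset_Ico_self hr.1
    (hdecay _ _ _ (hυ r hr') _ (hυ' r hr')).trans
      (add_le_add_right (hσ.2.1.monotoneOn (norm_nonneg _) hc0 (hc r hr')) _)
  have hV := le_gronwallBound_comp_of_fderiv_le (hVsmooth.differentiable one_ne_zero) hs
    (hξcont.prodMk hξ'cont) (fun r hr => (hξode r hr).prodMk (hξ'ode r hr)) hdecay' t ht
  simp only [hξ0, hξ'0, sub_zero, gronwallBound_of_K_ne_0 hκ] at hV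
  have hsum : αl ‖ξ t - ξ' t‖ ≤ exp (κ * t) * αu ‖x - x'‖ + (exp (κ * t) - 1) / κ * σ c :=
    calc αl ‖ξ t - ξ' t‖ ≤ V (ξ t, ξ' t) := (hsandwich _ _).1
      _ ≤ V (x, x') * exp (κ * t) + σ c / κ * (exp (κ * t) - 1) := hV
      _ ≤ αu ‖x - x'‖ * exp (κ * t) + σ c / κ * (exp (κ * t) - 1) := by
        gcongr; exact (hsandwich x x').2
      _ = exp (κ * t) * αu ‖x - x'‖ + (exp (κ * t) - 1) / κ * σ c := by ring
  simpa only [mul_assoc] using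
    hαl.2.1.le_add_of_apply_le_add (fun _ hr => hinv₂ _ hr) (fun _ hr => hinv₃ _ hr)
      (norm_nonneg _) (mul_nonneg (exp_pos _).le (hαu.nonneg (norm_nonneg _)))
      (mul_nonneg (exp_mul_sub_one_div_nonneg κ ht.1) (hσ.nonneg hc0)) hsum

/-- If a control system `ẋ = f(x,u)`, `u ∈ U ⊆ ℝᵐ`, admits a `δ`-FC Lyapunov
function `V` (i.e. `V` is `C¹`, nonnegative, `α̲(‖x−x'‖) ≤ V(x,x') ≤ ᾱ(‖x−x'‖)` with `α̲, ᾱ`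
class `𝒦∞`, and the derivative of `V` along any pair of vector fields `f(·,u), f(·,u')`
satisfies `DV(x,x')·(f(x,u), f(x',u')) ≤ κ V(x,x') + σ(‖u−u'‖)` with `σ` class `𝒦∞`, `κ ≠ 0`),
then any two trajectories `ξ, ξ'` on `[0,τ]` with inputs `υ, υ'` valued in `U` satisfy, for all
`t ∈ [0,τ]` and any bound `c ≥ ‖υ − υ'‖_∞`:
`‖ξ(t) − ξ'(t)‖ ≤ α̲⁻¹(2 e^{κt} ᾱ(‖x−x'‖)) + α̲⁻¹(2 ((e^{κt}−1)/κ) σ(c))`;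
i.e. `Σ` is `δ`-FC with `β(r,t) = α̲⁻¹(2 e^{κt} ᾱ(r))` and
`γ(r,t) = α̲⁻¹(2 ((e^{κt}−1)/κ) σ(r))`. -/
theorem deltaFC_of_lyapunov {n m : ℕ}
    (U : Set (Fin m → ℝ))
    (f : (Fin n → ℝ) → (Fin m → ℝ) → (Fin n → ℝ))
    (V : ((Fin n → ℝ) × (Fin n → ℝ)) → ℝ)
    (hVnonneg : ∀ p, 0 ≤ V p)
    (hVsmooth : ContDiff ℝ 1 V)
    (αl αu σ : ℝ → ℝ) (αlinv : ℝ → ℝ) (κ : ℝ) (hκ : κ ≠ 0)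
    (hαl : IsKInf αl) (hαu : IsKInf αu) (hσ : IsKInf σ)
    (hinv₁ : ∀ r ∈ Ici (0:ℝ), αlinv (αl r) = r)
    (hinv₂ : ∀ r ∈ Ici (0:ℝ), αl (αlinv r) = r)
    (hinv₃ : ∀ r ∈ Ici (0:ℝ), αlinv r ∈ Ici (0:ℝ))
    (hsandwich : ∀ x x' : Fin n → ℝ,
      αl ‖x - x'‖ ≤ V (x, x') ∧ V (x, x') ≤ αu ‖x - x'‖)
    (hdecay : ∀ (x x' : Fin n → ℝ), ∀ u ∈ U, ∀ u' ∈ U,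
      fderiv ℝ V (x, x') (f x u, f x' u') ≤ κ * V (x, x') + σ ‖u - u'‖)
    -- trajectories on `[0,τ]` with inputs `υ, υ' : [0,τ[ → U`
    (τ : ℝ) (hτ : 0 < τ)
    (υ υ' : ℝ → (Fin m → ℝ))
    (hυ : ∀ t ∈ Ico 0 τ, υ t ∈ U) (hυ' : ∀ t ∈ Ico 0 τ, υ' t ∈ U)
    (x x' : Fin n → ℝ) (ξ ξ' : ℝ → (Fin n → ℝ))
    (hξ0 : ξ 0 = x) (hξ'0 : ξ' 0 = x')
    (hξcont : ContinuousOn ξ (Icc 0 τ)) (hξ'cont : ContinuousOn ξ' (Icc 0 τ))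
    -- the ODE holds except on a countable set (the inputs are piecewise continuous)
    (s : Set ℝ) (hs : s.Countable)
    (hξode : ∀ t ∈ Ioo 0 τ \ s, HasDerivAt ξ (f (ξ t) (υ t)) t)
    (hξ'ode : ∀ t ∈ Ioo 0 τ \ s, HasDerivAt ξ' (f (ξ' t) (υ' t)) t)
    (t : ℝ) (ht : t ∈ Icc 0 τ)
    -- `c` is an upper bound for `‖υ − υ'‖_∞` (in particular it may be taken equal to it)
    (c : ℝ) (hc0 : 0 ≤ c) (hc : ∀ r ∈ Ico 0 τ, ‖υ r - υ' r‖ ≤ c) :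
    ‖ξ t - ξ' t‖ ≤
      αlinv (2 * Real.exp (κ * t) * αu ‖x - x'‖) +
        αlinv (2 * ((Real.exp (κ * t) - 1) / κ) * σ c) :=
  deltaFC_of_lyapunov_general U f V hVsmooth αl αu σ αlinv κ hκ hαl hαu hσ hinv₂ hinv₃ hsandwich
    hdecay τ υ υ' hυ hυ' x x' ξ ξ' hξ0 hξ'0 hξcont hξ'cont s hs hξode hξ'ode t ht c hc0 hc
end

section
/- Let Σ be a forward-complete control system on ℝⁿ with input set 𝖴 = ⋃_{j=1}^J ∏_{i=1}^m [a_i^j, b_i^j] ⊆ ℝᵐ (a_i^j < b_i^j), and suppose Σ is incrementally forward complete with bounding functions β, γ. Let q = (τ, η, μ, θ) be quantization parameters with τ, η, μ, θ > 0, let ε > 0 be a precision, and assume μ ≤ μ̂ := min_j min_i (b_i^j − a_i^j) and η ≤ ε ≤ θ. Then the relation R = {(x, x_q) ∈ ℝⁿ × [ℝⁿ]_η : ‖x − x_q‖ ≤ ε} is an ε-approximate simulation relation from S_τ(Σ) to S_q(Σ); in particular S_τ(Σ) ⪯_S^ε S_q(Σ). -/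
/-!
Everything is rounding to grids. Each `x` has an `η`-grid point within `η ≤ ε`. Given
`‖x − x_q‖ ≤ ε ≤ θ` and an input `u`, some `μ`-grid point `u_q` of the same box of `𝖴` lies
within `μ` of `u` (the boxes have sides at least `μ`), and the `η`-grid point `x_q'` nearest to
`ξ_{xu}(τ)` lies within `η ≤ ε` of it. Incremental forward completeness and the monotonicity of
`β(·,τ)`, `γ(·,τ)` give `‖ξ_{x_q u_q}(τ) − ξ_{xu}(τ)‖ ≤ β(θ,τ) + γ(μ,τ)`, so by the triangle
inequality `x_q →^{u_q} x_q'` is a transition of `S_q(Σ)`.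
-/

open Set

/-- A (metric) system: states `X`, inputs `U`, a transition relation, and an output map into
a metric space `Y`. -/
structure Sys (X U Y : Type*) [MetricSpace Y] where
  trans : X → U → X → Prop
  out : X → Y

/-- `R` is an `ε`-approximate simulation relation from `Sa` to `Sb`. -/
def IsApproxSim {X₁ U₁ X₂ U₂ Y : Type*} [MetricSpace Y]
    (Sa : Sys X₁ U₁ Y) (Sb : Sys X₂ U₂ Y) (ε : ℝ) (R : X₁ → X₂ → Prop) : Prop :=
  (∀ xa, ∃ xb, R xa xb) ∧
  (∀ xa xb, R xa xb → dist (Sa.out xa) (Sb.out xb) ≤ ε) ∧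
  (∀ xa xb, R xa xb → ∀ ua xa', Sa.trans xa ua xa' →
    ∃ ub xb', Sb.trans xb ub xb' ∧ R xa' xb')

def IsGridPoint {ι : Type*} (c : ℝ) (p : ι → ℝ) : Prop :=
  ∀ i, ∃ k : ℤ, p i = k * c

theorem exists_int_mul_abs_sub_le {c : ℝ} (hc : 0 < c) (x : ℝ) : ∃ k : ℤ, |x - k * c| ≤ c :=
  ⟨⌊x / c⌋, abs_le.2 ⟨by linarith [Int.sub_floor_div_mul_nonneg x hc],
    (Int.sub_floor_div_mul_lt x hc).le⟩⟩

theorem exists_int_mul_mem_Icc_abs_sub_le {a b c x : ℝ} (hc : 0 < c) (hcab : c ≤ b - a)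
    (hx : x ∈ Icc a b) : ∃ k : ℤ, (k * c : ℝ) ∈ Icc a b ∧ |x - k * c| ≤ c := by
  have hfloor : (⌊x / c⌋ : ℝ) * c ≤ x := by
    linarith [Int.sub_floor_div_mul_nonneg x hc]
  have hfloor' : x - ⌊x / c⌋ * c < c := Int.sub_floor_div_mul_lt x hc
  have hceil : a ≤ (⌈a / c⌉ : ℝ) * c := (div_le_iff₀ hc).1 (Int.le_ceil _)
  have hceil' : (⌈a / c⌉ : ℝ) * c < a + c := by
    have := mul_lt_mul_of_pos_right (Int.ceil_lt_add_one (a / c)) hc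
    rwa [add_mul, div_mul_cancel₀ _ hc.ne', one_mul] at this
  -- rounding `x` down may leave `[a, b]`; `⌈a / c⌉ * c` is then a grid point inside it
  refine ⟨max ⌊x / c⌋ ⌈a / c⌉, ?_, ?_⟩ <;> push_cast [max_mul_of_nonneg _ _ hc.le]
  · exact ⟨le_max_of_le_right hceil, max_le (hfloor.trans hx.2) (by linarith)⟩
  · rw [abs_sub_le_iff]
    constructor
    · linarith [le_max_left ((⌊x / c⌋ : ℝ) * c) (⌈a / c⌉ * c)]
    · linarith [max_le (a := (⌊x / c⌋ : ℝ) * c) (b := ⌈a / c⌉ * c) (c := x + c)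
        (by linarith) (by linarith [hx.1])]

section GridPoint

variable {ι : Type*} [Fintype ι] {c : ℝ}

theorem exists_isGridPoint_norm_sub_le (hc : 0 < c) (x : ι → ℝ) :
    ∃ p, IsGridPoint c p ∧ ‖x - p‖ ≤ c := by
  choose k hk using fun i => exists_int_mul_abs_sub_le hc (x i)
  exact ⟨fun i => k i * c, fun i => ⟨k i, rfl⟩, (pi_norm_le_iff_of_nonneg hc.le).2 hk⟩

theorem exists_isGridPoint_mem_Icc_norm_sub_le {a b x : ι → ℝ} (hc : 0 < c)
    (hcab : ∀ i, c ≤ b i - a i) (hx : x ∈ Icc a b) :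
    ∃ p ∈ Icc a b, IsGridPoint c p ∧ ‖x - p‖ ≤ c := by
  choose k hk using fun i => exists_int_mul_mem_Icc_abs_sub_le hc (hcab i) ⟨hx.1 i, hx.2 i⟩
  exact ⟨fun i => k i * c, ⟨fun i => (hk i).1.1, fun i => (hk i).1.2⟩, fun i => ⟨k i, rfl⟩,
    (pi_norm_le_iff_of_nonneg hc.le).2 fun i => (hk i).2⟩

theorem exists_isGridPoint_mem_iUnion_Icc_norm_sub_le {κ : Type*} {a b : κ → ι → ℝ}
    {x : ι → ℝ} (hc : 0 < c) (hcab : ∀ j i, c ≤ b j i - a j i)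
    (hx : x ∈ ⋃ j, Icc (a j) (b j)) :
    ∃ p ∈ ⋃ j, Icc (a j) (b j), IsGridPoint c p ∧ ‖x - p‖ ≤ c := by
  obtain ⟨j, hj⟩ := mem_iUnion.1 hx
  obtain ⟨p, hp, hgrid, hxp⟩ := exists_isGridPoint_mem_Icc_norm_sub_le hc (hcab j) hj
  exact ⟨p, mem_iUnion.2 ⟨j, hp⟩, hgrid, hxp⟩

end GridPoint

theorem IsKInf.le_of_norm_le {E : Type*} [SeminormedAddGroup E] {g : ℝ → ℝ} (hg : IsKInf g)
    {v : E} {s : ℝ} (hv : ‖v‖ ≤ s) : g ‖v‖ ≤ g s :=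
  hg.2.1.monotoneOn (norm_nonneg v) ((norm_nonneg v).trans hv) hv

theorem Stau_approx_simulated_by_Sq_general {n mdim : ℕ}
    (U : Set (Fin mdim → ℝ))
    (J : ℕ) (a b : Fin J → (Fin mdim → ℝ))
    (hU : U = ⋃ j, Set.Icc (a j) (b j))
    (traj : (Fin n → ℝ) → (Fin mdim → ℝ) → ℝ → (Fin n → ℝ))
    (β γ : ℝ → ℝ → ℝ)
    (hβK : ∀ s > (0:ℝ), IsKInf (fun r => β r s))
    (hγK : ∀ s > (0:ℝ), IsKInf (fun r => γ r s))
    (hFC : ∀ (x x' : Fin n → ℝ), ∀ u ∈ U, ∀ u' ∈ U, ∀ t ≥ (0:ℝ),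
      ‖traj x u t - traj x' u' t‖ ≤ β ‖x - x'‖ t + γ ‖u - u'‖ t)
    (τ η μ θ ε : ℝ)
    (hτ : 0 < τ) (hη : 0 < η) (hμ : 0 < μ)
    (hμhat : ∀ j i, μ ≤ b j i - a j i)
    (hηε : η ≤ ε) (hεθ : ε ≤ θ) :
    IsApproxSim
      -- `S_τ(Σ)`
      (⟨fun x (u : {u : Fin mdim → ℝ // u ∈ U}) x' => x' = traj x u.1 τ, id⟩ :
        Sys (Fin n → ℝ) {u : Fin mdim → ℝ // u ∈ U} (Fin n → ℝ))
      -- `S_q(Σ)`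
      (⟨fun xq (uq : {u : Fin mdim → ℝ // u ∈ U ∧ ∀ i, ∃ k : ℤ, u i = k * μ}) xq' =>
          ‖traj xq.1 uq.1 τ - xq'.1‖ ≤ β θ τ + γ μ τ + η,
        fun xq => xq.1⟩ :
        Sys {p : Fin n → ℝ // ∀ i, ∃ k : ℤ, p i = k * η}
            {u : Fin mdim → ℝ // u ∈ U ∧ ∀ i, ∃ k : ℤ, u i = k * μ} (Fin n → ℝ))
      ε
      (fun x xq => ‖x - xq.1‖ ≤ ε) := by
  subst hU
  refine ⟨fun x => ?_, fun x xq hR => by simpa [dist_eq_norm] using hR, ?_⟩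
  · obtain ⟨p, hp, hxp⟩ := exists_isGridPoint_norm_sub_le hη x
    exact ⟨⟨p, hp⟩, hxp.trans hηε⟩
  rintro x ⟨xq, _⟩ hR ⟨u, hu⟩ _ rfl
  obtain ⟨uq, huq, huq_grid, hu_uq⟩ := exists_isGridPoint_mem_iUnion_Icc_norm_sub_le hμ hμhat hu
  obtain ⟨xq', hxq'_grid, hnext⟩ := exists_isGridPoint_norm_sub_le hη (traj x u τ)
  refine ⟨⟨uq, huq, huq_grid⟩, ⟨xq', hxq'_grid⟩, ?_, hnext.trans hηε⟩
  calc ‖traj xq uq τ - xq'‖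
      ≤ ‖traj xq uq τ - traj x u τ‖ + ‖traj x u τ - xq'‖ := norm_sub_le_norm_sub_add_norm_sub _ _ _
    _ ≤ β ‖xq - x‖ τ + γ ‖uq - u‖ τ + η := add_le_add (hFC xq x uq huq u hu τ hτ.le) hnext
    _ ≤ β θ τ + γ μ τ + η := by
      gcongr
      · exact (hβK τ hτ).le_of_norm_le ((norm_sub_rev xq x ▸ hR).trans hεθ)
      · exact (hγK τ hτ).le_of_norm_le (norm_sub_rev uq u ▸ hu_uq)

/-- Let `Σ` be a `δ`-FC control system (trajectories `traj x u t = ξ_{xu}(t)`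
under constant inputs, bounding functions `β, γ`) with input set
`𝖴 = ⋃ⱼ ∏ᵢ [aᵢʲ, bᵢʲ]`.  For quantization parameters `q = (τ,η,μ,θ)` and precision `ε > 0`
with `μ ≤ μ̂` and `η ≤ ε ≤ θ`, the relation
`R = {(x, x_q) : ‖x − x_q‖ ≤ ε}` is an `ε`-approximate simulation relation from `S_τ(Σ)`
(states `ℝⁿ`, inputs `𝖴`, transitions `x →ᵘ ξ_{xu}(τ)`, identity output) to `S_q(Σ)`
(states `[ℝⁿ]_η`, inputs `[𝖴]_μ`, transitions
`x_q →^{u_q} x_q'` iff `‖ξ_{x_q u_q}(τ) − x_q'‖ ≤ β(θ,τ)+γ(μ,τ)+η`, output the inclusion);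
in particular `S_τ(Σ) ⪯_S^ε S_q(Σ)`. -/
theorem Stau_approx_simulated_by_Sq {n mdim : ℕ}
    (U : Set (Fin mdim → ℝ))
    (J : ℕ) (hJ : 0 < J) (a b : Fin J → (Fin mdim → ℝ))
    (hab : ∀ j i, a j i < b j i)
    (hU : U = ⋃ j, Set.Icc (a j) (b j))
    (traj : (Fin n → ℝ) → (Fin mdim → ℝ) → ℝ → (Fin n → ℝ))
    (htraj0 : ∀ x u, traj x u 0 = x)
    (β γ : ℝ → ℝ → ℝ)
    (hβc : Continuous (Function.uncurry β)) (hγc : Continuous (Function.uncurry γ))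
    (hβK : ∀ s > (0:ℝ), IsKInf (fun r => β r s))
    (hγK : ∀ s > (0:ℝ), IsKInf (fun r => γ r s))
    (hFC : ∀ (x x' : Fin n → ℝ), ∀ u ∈ U, ∀ u' ∈ U, ∀ t ≥ (0:ℝ),
      ‖traj x u t - traj x' u' t‖ ≤ β ‖x - x'‖ t + γ ‖u - u'‖ t)
    (τ η μ θ ε : ℝ)
    (hτ : 0 < τ) (hη : 0 < η) (hμ : 0 < μ) (hθ : 0 < θ) (hε : 0 < ε)
    (hμhat : ∀ j i, μ ≤ b j i - a j i)
    (hηε : η ≤ ε) (hεθ : ε ≤ θ) :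
    IsApproxSim
      -- `S_τ(Σ)`
      (⟨fun x (u : {u : Fin mdim → ℝ // u ∈ U}) x' => x' = traj x u.1 τ, id⟩ :
        Sys (Fin n → ℝ) {u : Fin mdim → ℝ // u ∈ U} (Fin n → ℝ))
      -- `S_q(Σ)`
      (⟨fun xq (uq : {u : Fin mdim → ℝ // u ∈ U ∧ ∀ i, ∃ k : ℤ, u i = k * μ}) xq' =>
          ‖traj xq.1 uq.1 τ - xq'.1‖ ≤ β θ τ + γ μ τ + η,
        fun xq => xq.1⟩ :
        Sys {p : Fin n → ℝ // ∀ i, ∃ k : ℤ, p i = k * η}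
            {u : Fin mdim → ℝ // u ∈ U ∧ ∀ i, ∃ k : ℤ, u i = k * μ} (Fin n → ℝ))
      ε
      (fun x xq => ‖x - xq.1‖ ≤ ε) :=
  Stau_approx_simulated_by_Sq_general U J a b hU traj β γ hβK hγK hFC τ η μ θ ε hτ hη hμ hμhat hηε
    hεθ
end

section
/- Let Σ be a forward-complete control system on ℝⁿ that is incrementally forward complete with bounding functions β, γ, let q = (τ, η, μ, θ) be quantization parameters with τ, η, μ, θ > 0, and let D = ⋃_{j=1}^M D_j ⊆ ℝⁿ, where each D_j = ∏_{i=1}^n [c_i^j, d_i^j] with c_i^j < d_i^j and η ≤ min_j min_i (d_i^j − c_i^j). Then the identity relation R = {(x_{qD}, x_q) ∈ [D]_η × [ℝⁿ]_η : x_{qD} = x_q} is a 0-approximate alternating simulation relation from S_{qD}(Σ) to S_q(Σ). -/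
open Set

/-- `R` is an `ε`-approximate alternating simulation relation from `Sa` to `Sb`. -/
def IsApproxAltSim {X₁ U₁ X₂ U₂ Y : Type*} [MetricSpace Y]
    (Sa : Sys X₁ U₁ Y) (Sb : Sys X₂ U₂ Y) (ε : ℝ) (R : X₁ → X₂ → Prop) : Prop :=
  (∀ xa, ∃ xb, R xa xb) ∧
  (∀ xa xb, R xa xb → dist (Sa.out xa) (Sb.out xb) ≤ ε) ∧
  (∀ xa xb, R xa xb → ∀ ua, (∃ xa', Sa.trans xa ua xa') →
    ∃ ub, (∃ xb', Sb.trans xb ub xb') ∧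
      ∀ xb', Sb.trans xb ub xb' → ∃ xa', Sa.trans xa ua xa' ∧ R xa' xb')

/-- Let `Σ` be a `δ`-FC control system (trajectories
`traj x u t = ξ_{xu}(t)` under constant inputs, bounding functions `β, γ`), let
`q = (τ,η,μ,θ)` be quantization parameters and let `D = ⋃ⱼ ∏ᵢ [cᵢʲ, dᵢʲ]` be a union of boxes
with sides of length at least `η`.  Then the identity relation
`R = {(x_{qD}, x_q) : x_{qD} = x_q}` is a `0`-approximate alternating simulation relation from
the finite model `S_{qD}(Σ)` (states `[D]_η`, transitions being `S_q(Σ)`-transitions whose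
every `S_q(Σ)`-successor stays in `[D]_η`) to `S_q(Σ)`. -/
theorem SqD_zero_alt_sim_Sq {n mdim : ℕ}
    (U : Set (Fin mdim → ℝ))
    (traj : (Fin n → ℝ) → (Fin mdim → ℝ) → ℝ → (Fin n → ℝ))
    (htraj0 : ∀ x u, traj x u 0 = x)
    (β γ : ℝ → ℝ → ℝ)
    (hβc : Continuous (Function.uncurry β)) (hγc : Continuous (Function.uncurry γ))
    (hβK : ∀ s > (0:ℝ), IsKInf (fun r => β r s))
    (hγK : ∀ s > (0:ℝ), IsKInf (fun r => γ r s))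
    (hFC : ∀ (x x' : Fin n → ℝ), ∀ u ∈ U, ∀ u' ∈ U, ∀ t ≥ (0:ℝ),
      ‖traj x u t - traj x' u' t‖ ≤ β ‖x - x'‖ t + γ ‖u - u'‖ t)
    (τ η μ θ : ℝ) (hτ : 0 < τ) (hη : 0 < η) (hμ : 0 < μ) (hθ : 0 < θ)
    (M : ℕ) (hM : 0 < M) (c d : Fin M → Fin n → ℝ)
    (hcd : ∀ j i, c j i < d j i)
    (D : Set (Fin n → ℝ)) (hD : D = ⋃ j, Set.Icc (c j) (d j))
    (hηD : ∀ j i, η ≤ d j i - c j i) :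
    IsApproxAltSim
      -- `S_{qD}(Σ)`
      (⟨fun x (u : {u : Fin mdim → ℝ // u ∈ U ∧ ∀ i, ∃ k : ℤ, u i = k * μ}) x' =>
          ‖traj x.1 u.1 τ - x'.1‖ ≤ β θ τ + γ μ τ + η ∧
          ∀ z : Fin n → ℝ, (∀ i, ∃ k : ℤ, z i = k * η) →
            ‖traj x.1 u.1 τ - z‖ ≤ β θ τ + γ μ τ + η → z ∈ D,
        fun x => x.1⟩ :
        Sys {p : Fin n → ℝ // p ∈ D ∧ ∀ i, ∃ k : ℤ, p i = k * η}
            {u : Fin mdim → ℝ // u ∈ U ∧ ∀ i, ∃ k : ℤ, u i = k * μ} (Fin n → ℝ))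
      -- `S_q(Σ)`
      (⟨fun xq (uq : {u : Fin mdim → ℝ // u ∈ U ∧ ∀ i, ∃ k : ℤ, u i = k * μ}) xq' =>
          ‖traj xq.1 uq.1 τ - xq'.1‖ ≤ β θ τ + γ μ τ + η,
        fun xq => xq.1⟩ :
        Sys {p : Fin n → ℝ // ∀ i, ∃ k : ℤ, p i = k * η}
            {u : Fin mdim → ℝ // u ∈ U ∧ ∀ i, ∃ k : ℤ, u i = k * μ} (Fin n → ℝ))
      0
      (fun xd xq => (xd.1 : Fin n → ℝ) = xq.1) := by
  refine ⟨fun xa => ⟨⟨xa.1, xa.2.2⟩, rfl⟩, fun xa xb h => by simp [h], ?_⟩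
  rintro xa xb h ua ⟨xa', hn, hin⟩
  refine ⟨ua, ⟨⟨xa'.1, xa'.2.2⟩, by simpa [← h] using hn⟩, ?_⟩
  rintro xb' hb'
  have hb'' : ‖traj xa.1 ua.1 τ - xb'.1‖ ≤ β θ τ + γ μ τ + η := by rwa [h]
  exact ⟨⟨xb'.1, hin xb'.1 xb'.2 hb'', xb'.2⟩, ⟨hb'', hin⟩, rfl⟩
end
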